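/- arXiv:1408.4711 — 7 statements merged into one kernel-verified Lean document; each statement's English description precedes it below -/
import Mathlib

section
/- Every cubic polynomial in two real variables is affinely critical: for every polynomial f : ℝ² → ℝ of total degree at most 3, the set {(x,y) ∈ ℝ² : ∇f(x,y) = 0} of critical points of f is a finite union of affine subspaces of ℝ² (i.e., there exist finitely many affine subspaces of ℝ², each being all of ℝ², a line, a point, or empty, whose union equals the critical set). -/
/-!
After a shear `(x, y) ↦ (x, y + t x)` we may assume the coefficient `α` of `x³` is nonzero
(otherwise `f` has degree at most two and its gradient is affine). Write
`f = α x³ + β(y) x² + γ(y) x + δ(y)`. Eliminating `x²` from `∂f/∂y` with `∂f/∂x` leaves a form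
`slope(y) x + intercept(y)`, and the critical set is the common zero set of `∂f/∂x` and this form.
If their resultant in `x` is a nonzero polynomial in `y`, the critical set is finite. If it
vanishes identically, then either `slope = 0`, in which case `β² - 3αγ` is constant and
`∂f/∂x = 0` is a pair of parallel lines (possibly coincident or empty), or `slope ∣ intercept`
and the critical set is a line together with finitely many points.
-/

open Polynomial

def IsFiniteAffineUnion (k : Type*) {V P : Type*} [Ring k] [AddCommGroup V] [Module k V]
    [AddTorsor V P] (s : Set P) : Prop :=
  ∃ S : Set (AffineSubspace k P), S.Finite ∧ s = ⋃ A ∈ S, (A : Set P)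

section AffineUnion

variable {k V P V₂ P₂ : Type*} [Ring k] [AddCommGroup V] [Module k V] [AddTorsor V P]
  [AddCommGroup V₂] [Module k V₂] [AddTorsor V₂ P₂] {s t : Set P}

variable (k) in
theorem Set.Finite.isFiniteAffineUnion (hs : s.Finite) : IsFiniteAffineUnion k s :=
  ⟨(fun p => affineSpan k {p}) '' s, hs.image _, by simp [AffineSubspace.coe_affineSpan_singleton]⟩

namespace IsFiniteAffineUnion

theorem union (hs : IsFiniteAffineUnion k s) (ht : IsFiniteAffineUnion k t) :
    IsFiniteAffineUnion k (s ∪ t) := by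
  obtain ⟨S, hS, rfl⟩ := hs
  obtain ⟨T, hT, rfl⟩ := ht
  exact ⟨S ∪ T, hS.union hT, (Set.biUnion_union S T _).symm⟩

theorem preimage (f : P₂ →ᵃ[k] P) (hs : IsFiniteAffineUnion k s) :
    IsFiniteAffineUnion k (f ⁻¹' s) := by
  obtain ⟨S, hS, rfl⟩ := hs
  exact ⟨AffineSubspace.comap f '' S, hS.image _, by simp [AffineSubspace.coe_comap]⟩

theorem exists_fin (hs : IsFiniteAffineUnion k s) :
    ∃ (n : ℕ) (A : Fin n → AffineSubspace k P), s = ⋃ i, (A i : Set P) := by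
  obtain ⟨S, hS, rfl⟩ := hs
  obtain ⟨n, A, hA⟩ := hS.fin_embedding
  exact ⟨n, A, by rw [← hA, Set.biUnion_range]⟩

end IsFiniteAffineUnion

end AffineUnion

theorem isFiniteAffineUnion_setOf_line (p q c : ℝ) :
    IsFiniteAffineUnion ℝ {v : Fin 2 → ℝ | p * v 0 + q * v 1 = c} := by
  have := ((Set.finite_singleton c).isFiniteAffineUnion ℝ).preimage
    (p • LinearMap.proj 0 + q • LinearMap.proj 1 : (Fin 2 → ℝ) →ₗ[ℝ] ℝ).toAffineMap
  simpa [Set.preimage] using this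

theorem isFiniteAffineUnion_setOf_sq_eq (p q r d : ℝ) :
    IsFiniteAffineUnion ℝ {v : Fin 2 → ℝ | (p * v 0 + q * v 1 + r) ^ 2 = d} := by
  rcases lt_or_ge d 0 with hd | hd
  · convert Set.finite_empty.isFiniteAffineUnion ℝ
    ext v
    simpa using (hd.trans_le (sq_nonneg _)).ne'
  · obtain ⟨s, rfl⟩ : ∃ s, d = s ^ 2 := ⟨√d, (Real.sq_sqrt hd).symm⟩
    convert (isFiniteAffineUnion_setOf_line p q (s - r)).union
      (isFiniteAffineUnion_setOf_line p q (-s - r)) using 1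
    ext v
    simp only [Set.mem_ofPred_eq, Set.mem_union, sq_eq_sq_iff_eq_or_eq_neg]
    constructor <;> rintro (h | h)
    exacts [.inl (by linarith), .inr (by linarith), .inl (by linarith), .inr (by linarith)]

theorem Set.Finite.setOf_fin_two_of_fibers {P : ℝ → Prop} {Q : ℝ → ℝ → Prop}
    (hP : {y | P y}.Finite) (hQ : ∀ y, P y → {x | Q x y}.Finite) :
    {v : Fin 2 → ℝ | P (v 1) ∧ Q (v 0) (v 1)}.Finite := by
  refine (hP.biUnion fun y hy => (hQ y hy).image fun x => ![x, y]).subset ?_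
  rintro v ⟨h1, h2⟩
  refine Set.mem_biUnion h1 ⟨v 0, h2, ?_⟩
  ext i
  fin_cases i <;> rfl

theorem finite_setOf_quadratic_eq_zero {a : ℝ} (ha : a ≠ 0) (b c : ℝ) :
    {x : ℝ | a * x ^ 2 + b * x + c = 0}.Finite := by
  have hp : C a * X ^ 2 + C b * X + C c ≠ 0 := fun h => ha (by simpa using congr_arg (coeff · 2) h)
  simpa using finite_setOfPred_isRoot hp

theorem Polynomial.dvd_of_dvd_sq_of_natDegree_le_one {K : Type*} [Field K] {p q : K[X]}
    (hp0 : p ≠ 0) (hp : p.natDegree ≤ 1) (h : p ∣ q ^ 2) : p ∣ q := by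
  rcases Nat.le_one_iff_eq_zero_or_eq_one.mp hp with hp | hp
  · exact (isUnit_iff_degree_eq_zero.mpr ((degree_eq_iff_natDegree_eq hp0).mpr hp)).dvd
  · exact (irreducible_of_degree_eq_one ((degree_eq_iff_natDegree_eq hp0).mpr hp)).prime
      |>.dvd_of_dvd_pow h

theorem Polynomial.natDegree_le_one_of_C_mul_sq_eq {K : Type*} [Field K] {a : K} (ha : a ≠ 0)
    {m p q : K[X]} (hp : p.natDegree ≤ 1) (hq : q.natDegree ≤ 2) (h : C a * m ^ 2 = p * m + q) :
    m.natDegree ≤ 1 := by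
  by_contra! hm
  have h1 : 2 * m.natDegree ≤ max (p * m).natDegree q.natDegree := by
    calc 2 * m.natDegree = (C a * m ^ 2).natDegree := by
          rw [natDegree_C_mul ha, natDegree_pow, mul_comm]
      _ ≤ _ := h ▸ natDegree_add_le _ _
  have h2 := natDegree_mul_le (p := p) (q := m)
  omega

noncomputable section

namespace CubicInX

variable (α : ℝ) (β γ ε : ℝ[X])

def dx (x y : ℝ) : ℝ := 3 * α * x ^ 2 + 2 * β.eval y * x + γ.eval y

def dy (x y : ℝ) : ℝ := (derivative β).eval y * x ^ 2 + (derivative γ).eval y * x + ε.eval y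

/-- The critical set of `α x³ + β(y) x² + γ(y) x + δ(y)`, where `δ' = ε`. -/
def critSet : Set (Fin 2 → ℝ) := {v | dx α β γ (v 0) (v 1) = 0 ∧ dy β γ ε (v 0) (v 1) = 0}

/-- `3α · dy - β'(y) · dx = slope(y) · x + intercept(y)`. -/
def slope : ℝ[X] := C (3 * α) * derivative γ - 2 * β * derivative β

def intercept : ℝ[X] := C (3 * α) * ε - derivative β * γ

/-- The resultant in `x` of `dx` and `slope(y) · x + intercept(y)`. -/
def resultant : ℝ[X] :=
  C (3 * α) * intercept α β γ ε ^ 2 - 2 * β * slope α β γ * intercept α β γ ε +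
    γ * slope α β γ ^ 2

variable {α β γ ε}

theorem mem_critSet_iff (hα : α ≠ 0) {v : Fin 2 → ℝ} :
    v ∈ critSet α β γ ε ↔ dx α β γ (v 0) (v 1) = 0 ∧
      (slope α β γ).eval (v 1) * v 0 + (intercept α β γ ε).eval (v 1) = 0 := by
  have key : (slope α β γ).eval (v 1) * v 0 + (intercept α β γ ε).eval (v 1) =
      3 * α * dy β γ ε (v 0) (v 1) - (derivative β).eval (v 1) * dx α β γ (v 0) (v 1) := by
    simp only [slope, intercept, dx, dy, eval_sub, eval_mul, eval_C, eval_ofNat]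
    ring
  simp only [critSet, Set.mem_ofPred_eq, key]
  constructor
  · rintro ⟨h1, h2⟩
    simp [h1, h2]
  · rintro ⟨h1, h2⟩
    simpa [h1, hα] using h2

theorem eval_resultant_eq_zero {x y : ℝ} (h1 : dx α β γ x y = 0)
    (h2 : (slope α β γ).eval y * x + (intercept α β γ ε).eval y = 0) :
    (resultant α β γ ε).eval y = 0 := by
  simp only [resultant, dx, eval_add, eval_sub, eval_mul, eval_pow, eval_C, eval_ofNat] at h1 ⊢
  linear_combination (slope α β γ).eval y ^ 2 * h1 + (3 * α * ((intercept α β γ ε).eval y -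
    (slope α β γ).eval y * x) - 2 * β.eval y * (slope α β γ).eval y) * h2

theorem finite_setOf_eval_eq_zero_and_dx (hα : α ≠ 0) {p : ℝ[X]} (hp : p ≠ 0) :
    {v : Fin 2 → ℝ | p.eval (v 1) = 0 ∧ dx α β γ (v 0) (v 1) = 0}.Finite :=
  Set.Finite.setOf_fin_two_of_fibers (P := fun y => p.eval y = 0)
    (Q := fun x y => dx α β γ x y = 0) (finite_setOfPred_isRoot hp) fun y _ =>
      finite_setOf_quadratic_eq_zero (mul_ne_zero three_ne_zero hα) (2 * β.eval y) (γ.eval y)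

theorem natDegree_slope_le (hβ : β.natDegree ≤ 1) (hγ : γ.natDegree ≤ 2) :
    (slope α β γ).natDegree ≤ 1 := by
  have hβ' := natDegree_derivative_le β
  have hγ' := natDegree_derivative_le γ
  refine natDegree_sub_le_of_le (natDegree_C_mul_le _ _ |>.trans (by omega))
    (natDegree_mul_le_of_le (natDegree_mul_le_of_le (natDegree_ofNat 2).le hβ) (by omega))
    |>.trans ?_
  omega

theorem isFiniteAffineUnion_critSet_of_resultant_ne_zero (hα : α ≠ 0)
    (hT : resultant α β γ ε ≠ 0) : IsFiniteAffineUnion ℝ (critSet α β γ ε) :=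
  ((finite_setOf_eval_eq_zero_and_dx hα hT).subset fun _ hv =>
    have ⟨h1, h2⟩ := (mem_critSet_iff hα).1 hv
    ⟨eval_resultant_eq_zero h1 h2, h1⟩).isFiniteAffineUnion ℝ

theorem isFiniteAffineUnion_critSet_of_slope_eq_zero (hα : α ≠ 0) (hβ : β.natDegree ≤ 1)
    (hT : resultant α β γ ε = 0) (ha : slope α β γ = 0) :
    IsFiniteAffineUnion ℝ (critSet α β γ ε) := by
  have hB : intercept α β γ ε = 0 := by simpa [resultant, ha, hα] using hT
  -- `(β² - 3αγ)' = -slope`, so the discriminant of `dx` in `x` is a constant `d`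
  obtain ⟨d, hd⟩ : ∃ d, β ^ 2 - C (3 * α) * γ = C d := by
    refine ⟨_, eq_C_of_derivative_eq_zero ?_⟩
    rw [← neg_eq_zero, ← ha, slope]
    simp only [sq, derivative_sub, derivative_mul, derivative_C, zero_mul, zero_add]
    ring
  convert isFiniteAffineUnion_setOf_sq_eq (3 * α) (β.coeff 1) (β.coeff 0) d using 1
  ext v
  have hβy : β.eval (v 1) = β.coeff 1 * v 1 + β.coeff 0 := by
    conv_lhs => rw [eq_X_add_C_of_natDegree_le_one hβ]
    simp
  have hdy := congr_arg (eval (v 1)) hd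
  simp only [eval_sub, eval_pow, eval_mul, eval_C, hβy] at hdy
  have key : (3 * α * v 0 + β.coeff 1 * v 1 + β.coeff 0) ^ 2 - d =
      3 * α * dx α β γ (v 0) (v 1) := by
    rw [dx, hβy]
    linear_combination hdy
  rw [mem_critSet_iff hα, ha, hB, Set.mem_ofPred_eq, ← sub_eq_zero (a := (_ : ℝ) ^ 2), key]
  simp [hα]

theorem isFiniteAffineUnion_critSet_of_slope_ne_zero (hα : α ≠ 0) (hβ : β.natDegree ≤ 1)
    (hγ : γ.natDegree ≤ 2) (hT : resultant α β γ ε = 0) (ha : slope α β γ ≠ 0) :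
    IsFiniteAffineUnion ℝ (critSet α β γ ε) := by
  have hα3 : 3 * α ≠ 0 := mul_ne_zero three_ne_zero hα
  rw [resultant] at hT
  obtain ⟨m, hm⟩ : slope α β γ ∣ intercept α β γ ε := by
    refine dvd_of_dvd_sq_of_natDegree_le_one ha (natDegree_slope_le hβ hγ) ?_
    refine (isUnit_C.2 hα3.isUnit).dvd_mul_left.1
      ⟨2 * β * intercept α β γ ε - γ * slope α β γ, ?_⟩
    linear_combination hT
  -- `dx` vanishes on the line `x = -m(y)`
  have hm0 : C (3 * α) * m ^ 2 - 2 * β * m + γ = 0 := by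
    have : slope α β γ ^ 2 * (C (3 * α) * m ^ 2 - 2 * β * m + γ) = 0 := by
      rw [← hT, hm]
      ring
    simpa [ha] using this
  have hm1 : m.natDegree ≤ 1 :=
    natDegree_le_one_of_C_mul_sq_eq hα3 (p := 2 * β) (q := -γ)
      (natDegree_mul_le_of_le (natDegree_ofNat 2).le hβ) (by rwa [natDegree_neg])
      (by linear_combination hm0)
  convert ((finite_setOf_eval_eq_zero_and_dx hα ha).isFiniteAffineUnion ℝ).union
    (isFiniteAffineUnion_setOf_line 1 (m.coeff 1) (-m.coeff 0)) using 1
  ext v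
  have hmy : m.eval (v 1) = m.coeff 1 * v 1 + m.coeff 0 := by
    conv_lhs => rw [eq_X_add_C_of_natDegree_le_one hm1]
    simp
  have hdx : dx α β γ (-m.eval (v 1)) (v 1) = 0 := by
    have := congr_arg (eval (v 1)) hm0
    simp only [eval_add, eval_sub, eval_mul, eval_pow, eval_C, eval_ofNat, eval_zero] at this
    rw [dx]
    linear_combination this
  simp only [mem_critSet_iff hα, hm, eval_mul, Set.mem_union, Set.mem_ofPred_eq]
  constructor
  · rintro ⟨h1, h2⟩
    rcases mul_eq_zero.1 (show (slope α β γ).eval (v 1) * (v 0 + m.eval (v 1)) = 0 by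
      linear_combination h2) with h | h
    · exact .inl ⟨h, h1⟩
    · exact .inr (by linarith)
  · rintro (⟨h1, h2⟩ | h)
    · exact ⟨h2, by simp [h1]⟩
    · have hx : v 0 = -m.eval (v 1) := by linarith
      exact ⟨hx ▸ hdx, by rw [hx]; ring⟩

theorem isFiniteAffineUnion_critSet (hα : α ≠ 0) (hβ : β.natDegree ≤ 1)
    (hγ : γ.natDegree ≤ 2) : IsFiniteAffineUnion ℝ (critSet α β γ ε) := by
  by_cases hT : resultant α β γ ε = 0
  · by_cases ha : slope α β γ = 0
    · exact isFiniteAffineUnion_critSet_of_slope_eq_zero hα hβ hT ha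
    · exact isFiniteAffineUnion_critSet_of_slope_ne_zero hα hβ hγ hT ha
  · exact isFiniteAffineUnion_critSet_of_resultant_ne_zero hα hT

end CubicInX

namespace CubicCoeffs

variable (c : ℕ → ℕ → ℝ)

/-- With `c i j` the coefficient of `x ^ i * y ^ j` in a cubic `f`, this is `∂f/∂x`. -/
def dx (x y : ℝ) : ℝ :=
  3 * c 3 0 * x ^ 2 + 2 * c 2 1 * x * y + c 1 2 * y ^ 2 + 2 * c 2 0 * x + c 1 1 * y + c 1 0

def dy (x y : ℝ) : ℝ :=
  c 2 1 * x ^ 2 + 2 * c 1 2 * x * y + 3 * c 0 3 * y ^ 2 + c 1 1 * x + 2 * c 0 2 * y + c 0 1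

def critSet : Set (Fin 2 → ℝ) := {v | dx c (v 0) (v 1) = 0 ∧ dy c (v 0) (v 1) = 0}

/-- The coefficients of `f (x, y + t x)`. -/
def shearCoeff (t : ℝ) (i j : ℕ) : ℝ :=
  ∑ k ∈ Finset.range (i + 1), ((j + k).choose k : ℝ) * t ^ k * c (i - k) (j + k)

def shear (t : ℝ) : (Fin 2 → ℝ) →ₗ[ℝ] Fin 2 → ℝ := Matrix.toLin' !![1, 0; t, 1]

theorem critSet_eq_preimage_shear (t : ℝ) :
    critSet c = shear (-t) ⁻¹' critSet (shearCoeff c t) := by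
  ext v
  have hx : dx (shearCoeff c t) (v 0) (v 1 - t * v 0) =
      dx c (v 0) (v 1) + t * dy c (v 0) (v 1) := by
    simp [dx, dy, shearCoeff, Finset.sum_range_succ, Nat.choose]
    ring
  have hy : dy (shearCoeff c t) (v 0) (v 1 - t * v 0) = dy c (v 0) (v 1) := by
    simp [dy, shearCoeff, Finset.sum_range_succ, Nat.choose]
    ring
  have hs : shear (-t) v = ![v 0, v 1 - t * v 0] := by
    ext i
    fin_cases i
    · simp [shear, Matrix.mulVec, dotProduct]
    · simp [shear, Matrix.mulVec, dotProduct]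
      ring
  simp only [critSet, Set.mem_preimage, Set.mem_ofPred_eq, hs, Matrix.cons_val_zero,
    Matrix.cons_val_one, hx, hy]
  constructor
  · rintro ⟨h1, h2⟩
    simp [h1, h2]
  · rintro ⟨h1, h2⟩
    exact ⟨by simpa [h2] using h1, h2⟩

variable {c}

theorem exists_shearCoeff_ne_zero (hc : ¬(c 3 0 = 0 ∧ c 2 1 = 0 ∧ c 1 2 = 0 ∧ c 0 3 = 0)) :
    ∃ t, shearCoeff c t 3 0 ≠ 0 := by
  by_contra! h
  apply hc
  have hp : C (c 0 3) * X ^ 3 + C (c 1 2) * X ^ 2 + C (c 2 1) * X + C (c 3 0) = 0 := by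
    refine Polynomial.funext fun t => ?_
    rw [eval_zero, ← h t]
    simp [shearCoeff, Finset.sum_range_succ]
    ring
  have h3 := congr_arg (coeff · 3) hp
  have h2 := congr_arg (coeff · 2) hp
  have h1 := congr_arg (coeff · 1) hp
  have h0 := congr_arg (coeff · 0) hp
  simp only [coeff_add, coeff_C_mul_X_pow, coeff_C_mul_X, coeff_C, coeff_zero] at h3 h2 h1 h0
  norm_num at h3 h2 h1 h0
  exact ⟨h0, h1, h2, h3⟩

theorem critSet_eq_cubicInX_critSet :
    critSet c = CubicInX.critSet (c 3 0) (C (c 2 1) * X + C (c 2 0))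
      (C (c 1 2) * X ^ 2 + C (c 1 1) * X + C (c 1 0))
      (C (3 * c 0 3) * X ^ 2 + C (2 * c 0 2) * X + C (c 0 1)) := by
  ext v
  have hx : CubicInX.dx (c 3 0) (C (c 2 1) * X + C (c 2 0))
      (C (c 1 2) * X ^ 2 + C (c 1 1) * X + C (c 1 0)) (v 0) (v 1) = dx c (v 0) (v 1) := by
    simp [CubicInX.dx, dx]
    ring
  have hy : CubicInX.dy (C (c 2 1) * X + C (c 2 0))
      (C (c 1 2) * X ^ 2 + C (c 1 1) * X + C (c 1 0))
      (C (3 * c 0 3) * X ^ 2 + C (2 * c 0 2) * X + C (c 0 1)) (v 0) (v 1) = dy c (v 0) (v 1) := by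
    simp [CubicInX.dy, dy]
    ring
  simp only [critSet, CubicInX.critSet, Set.mem_ofPred_eq, hx, hy]

theorem isFiniteAffineUnion_critSet_of_quadratic
    (hc : c 3 0 = 0 ∧ c 2 1 = 0 ∧ c 1 2 = 0 ∧ c 0 3 = 0) : IsFiniteAffineUnion ℝ (critSet c) := by
  obtain ⟨h30, h21, h12, h03⟩ := hc
  let hessian : Matrix (Fin 2) (Fin 2) ℝ := !![2 * c 2 0, c 1 1; c 1 1, 2 * c 0 2]
  have h : critSet c = Matrix.toLin' hessian ⁻¹' {![-c 1 0, -c 0 1]} := by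
    ext v
    simp [critSet, dx, dy, h30, h21, h12, h03, hessian, funext_iff, Fin.forall_fin_two, dotProduct]
    constructor <;> rintro ⟨h1, h2⟩ <;> constructor <;> linarith
  rw [h]
  exact IsFiniteAffineUnion.preimage (Matrix.toLin' hessian).toAffineMap
    ((Set.finite_singleton _).isFiniteAffineUnion ℝ)

theorem isFiniteAffineUnion_critSet (c : ℕ → ℕ → ℝ) : IsFiniteAffineUnion ℝ (critSet c) := by
  by_cases hc : c 3 0 = 0 ∧ c 2 1 = 0 ∧ c 1 2 = 0 ∧ c 0 3 = 0
  · exact isFiniteAffineUnion_critSet_of_quadratic hc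
  · obtain ⟨t, ht⟩ := exists_shearCoeff_ne_zero hc
    rw [critSet_eq_preimage_shear c t, critSet_eq_cubicInX_critSet]
    refine (CubicInX.isFiniteAffineUnion_critSet ht ?_ ?_).preimage (shear (-t)).toAffineMap
    · compute_degree
    · compute_degree

end CubicCoeffs

end

theorem Finsupp.sum_support_fin_two (m : Fin 2 →₀ ℕ) : ∑ k ∈ m.support, m k = m 0 + m 1 := by
  rw [Finset.sum_subset (Finset.subset_univ _) (by simp), Fin.sum_univ_two]

namespace MvPolynomial

variable {R : Type*} [CommSemiring R] {f : MvPolynomial (Fin 2) R} {n : ℕ}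

theorem coeff_single_add_single_eq_zero (hf : f.totalDegree ≤ n) {i j : ℕ} (h : n < i + j) :
    f.coeff (Finsupp.single 0 i + Finsupp.single 1 j) = 0 :=
  coeff_eq_zero_of_totalDegree_lt (hf.trans_lt (by rw [Finsupp.sum_support_fin_two]; simpa using h))

theorem eq_sum_monomial_of_totalDegree_le (hf : f.totalDegree ≤ n) :
    f = ∑ i ∈ Finset.range (n + 1), ∑ j ∈ Finset.range (n + 1),
      monomial (Finsupp.single 0 i + Finsupp.single 1 j)
        (f.coeff (Finsupp.single 0 i + Finsupp.single 1 j)) := by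
  ext m
  have hm : Finsupp.single 0 (m 0) + Finsupp.single 1 (m 1) = m := by
    ext k
    fin_cases k <;> simp
  have key : ∀ i j, Finsupp.single 0 i + Finsupp.single 1 j = m ↔ i = m 0 ∧ j = m 1 := by
    refine fun i j => ⟨?_, ?_⟩
    · rintro rfl
      simp
    · rintro ⟨rfl, rfl⟩
      exact hm
  simp only [coeff_sum, coeff_monomial, key, ite_and, Finset.sum_ite_irrel, Finset.sum_ite_eq',
    Finset.mem_range, Order.lt_add_one_iff, Finset.sum_const_zero, hm]
  split_ifs with h0 h1
  · rfl
  all_goals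
    refine coeff_eq_zero_of_totalDegree_lt (hf.trans_lt ?_)
    rw [Finsupp.sum_support_fin_two]
    omega

theorem eval_pderiv_zero_of_totalDegree_le_three {f : MvPolynomial (Fin 2) ℝ}
    (hf : f.totalDegree ≤ 3) (v : Fin 2 → ℝ) :
    eval v (pderiv 0 f) =
      CubicCoeffs.dx (fun i j => f.coeff (Finsupp.single 0 i + Finsupp.single 1 j))
        (v 0) (v 1) := by
  conv_lhs => rw [eq_sum_monomial_of_totalDegree_le hf]
  simp [Finset.sum_range_succ, pderiv_monomial, eval_monomial, CubicCoeffs.dx,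
    coeff_single_add_single_eq_zero hf]
  ring

theorem eval_pderiv_one_of_totalDegree_le_three {f : MvPolynomial (Fin 2) ℝ}
    (hf : f.totalDegree ≤ 3) (v : Fin 2 → ℝ) :
    eval v (pderiv 1 f) =
      CubicCoeffs.dy (fun i j => f.coeff (Finsupp.single 0 i + Finsupp.single 1 j))
        (v 0) (v 1) := by
  conv_lhs => rw [eq_sum_monomial_of_totalDegree_le hf]
  simp [Finset.sum_range_succ, pderiv_monomial, eval_monomial, CubicCoeffs.dy,
    coeff_single_add_single_eq_zero hf]
  ring

end MvPolynomial

open MvPolynomial in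
theorem stmt_1 (f : MvPolynomial (Fin 2) ℝ) (hdeg : f.totalDegree ≤ 3) :
    ∃ (k : ℕ) (A : Fin k → AffineSubspace ℝ (Fin 2 → ℝ)),
      {x : Fin 2 → ℝ | ∀ i : Fin 2, MvPolynomial.eval x (MvPolynomial.pderiv i f) = 0} =
        ⋃ i, (A i : Set (Fin 2 → ℝ)) := by
  have hcrit : {x : Fin 2 → ℝ | ∀ i : Fin 2, eval x (pderiv i f) = 0} =
      CubicCoeffs.critSet fun i j => f.coeff (Finsupp.single 0 i + Finsupp.single 1 j) := by
    ext v
    simp only [Set.mem_ofPred_eq, Fin.forall_fin_two, CubicCoeffs.critSet,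
      eval_pderiv_zero_of_totalDegree_le_three hdeg, eval_pderiv_one_of_totalDegree_le_three hdeg]
  rw [hcrit]
  exact (CubicCoeffs.isFiniteAffineUnion_critSet _).exists_fin
end

section
/- Let K ⊆ ℝ² be a convex set whose two-dimensional Lebesgue measure (area) is strictly less than 1/2. Then the integer points of K are collinear: there exists a line in ℝ² containing K ∩ ℤ² (equivalently, the affine dimension of the convex hull of K ∩ ℤ² is at most 1). -/
/-!
If `K` contains three non-collinear lattice points `p, q, r`, it contains the triangle they span.
That triangle is the image of the unit triangle under an affine map whose linear part has
determinant the cross product of `q - p` and `r - p`, a nonzero integer; since two copies of the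
unit triangle cover the unit square, the triangle has area at least `1/2`.
-/

open MeasureTheory

theorem measure_preimage_const_sub {G : Type*} [MeasurableSpace G] [AddGroup G] [MeasurableAdd G]
    [MeasurableNeg G] (μ : Measure G) [μ.IsAddLeftInvariant] [μ.IsNegInvariant] (c : G)
    (s : Set G) : μ ((fun w => c - w) ⁻¹' s) = μ s := by
  have : (fun w => c - w) ⁻¹' s = Neg.neg ⁻¹' ((fun w => c + w) ⁻¹' s) := by
    ext w; simp [sub_eq_add_neg]
  rw [this, Measure.measure_preimage_neg, measure_preimage_add]

def unitTriangle : Set (ℝ × ℝ) := {w | 0 ≤ w.1 ∧ 0 ≤ w.2 ∧ w.1 + w.2 ≤ 1}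

theorem Icc_subset_unitTriangle_union :
    Set.Icc (0 : ℝ × ℝ) 1 ⊆ unitTriangle ∪ (fun w => 1 - w) ⁻¹' unitTriangle := by
  rintro ⟨s, t⟩ ⟨⟨hs₀, ht₀⟩, hs₁, ht₁⟩
  simp only [unitTriangle, Set.mem_union, Set.mem_preimage, Set.mem_ofPred_eq, Prod.fst_sub,
    Prod.snd_sub, Prod.fst_one, Prod.snd_one] at *
  by_cases h : s + t ≤ 1
  · exact Or.inl ⟨hs₀, ht₀, h⟩
  · exact Or.inr ⟨by linarith, by linarith, by linarith⟩

theorem one_le_two_mul_volume_unitTriangle : 1 ≤ 2 * volume unitTriangle :=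
  calc (1 : ENNReal) = volume (Set.Icc (0 : ℝ × ℝ) 1) := by
        rw [← Prod.mk_zero_zero, ← Prod.mk_one_one, ← Set.Icc_prod_Icc, Measure.volume_eq_prod,
          Measure.prod_prod, Real.volume_Icc]
        simp
    _ ≤ volume unitTriangle + volume ((fun w => 1 - w) ⁻¹' unitTriangle) :=
        (measure_mono Icc_subset_unitTriangle_union).trans (measure_union_le _ _)
    _ = 2 * volume unitTriangle := by rw [measure_preimage_const_sub, two_mul]

noncomputable def spanMap (u v : ℝ × ℝ) : ℝ × ℝ →ₗ[ℝ] ℝ × ℝ :=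
  (LinearMap.toSpanSingleton ℝ _ u).coprod (LinearMap.toSpanSingleton ℝ _ v)

theorem spanMap_apply (u v w : ℝ × ℝ) : spanMap u v w = w.1 • u + w.2 • v := rfl

theorem det_spanMap (u v : ℝ × ℝ) : LinearMap.det (spanMap u v) = u.1 * v.2 - u.2 * v.1 := by
  rw [← LinearMap.det_toMatrix (Module.Basis.finTwoProd ℝ), Matrix.det_fin_two]
  simp [LinearMap.toMatrix_apply, spanMap_apply, Module.Basis.coe_finTwoProd_repr, mul_comm]

theorem addHaar_image_const_add_linearMap {E : Type*} [NormedAddCommGroup E] [NormedSpace ℝ E]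
    [MeasurableSpace E] [BorelSpace E] [FiniteDimensional ℝ E] (μ : Measure E) [μ.IsAddHaarMeasure]
    (p : E) (L : E →ₗ[ℝ] E) (s : Set E) :
    μ ((fun w => p + L w) '' s) = ENNReal.ofReal |LinearMap.det L| * μ s := by
  rw [← Measure.addHaar_image_linearMap, ← Set.image_image (fun w => p + w), Set.image_add_left,
    measure_preimage_add]

theorem Convex.image_unitTriangle_subset {K : Set (ℝ × ℝ)} (hK : Convex ℝ K) {p q r : ℝ × ℝ}
    (hp : p ∈ K) (hq : q ∈ K) (hr : r ∈ K) :
    (fun w => p + spanMap (q - p) (r - p) w) '' unitTriangle ⊆ K := by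
  rintro _ ⟨⟨s, t⟩, ⟨hs, ht, hst⟩, rfl⟩
  have hmem := hK.sum_mem (t := Finset.univ) (w := ![1 - s - t, s, t]) (z := ![p, q, r])
    (by simpa [Fin.forall_fin_succ, hs, ht, sub_sub, add_comm] using hst)
    (by simp [Fin.sum_univ_three]; ring) (by simp [Fin.forall_fin_succ, hp, hq, hr])
  convert hmem using 1
  simp only [Fin.sum_univ_three, spanMap_apply, Matrix.cons_val_zero, Matrix.cons_val_one,
    Matrix.cons_val]
  module

theorem Convex.ofReal_abs_cross_le_two_mul_volume {K : Set (ℝ × ℝ)} (hK : Convex ℝ K)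
    {p q r : ℝ × ℝ} (hp : p ∈ K) (hq : q ∈ K) (hr : r ∈ K) :
    ENNReal.ofReal |(q.1 - p.1) * (r.2 - p.2) - (q.2 - p.2) * (r.1 - p.1)| ≤ 2 * volume K :=
  calc ENNReal.ofReal |(q.1 - p.1) * (r.2 - p.2) - (q.2 - p.2) * (r.1 - p.1)|
      = ENNReal.ofReal |LinearMap.det (spanMap (q - p) (r - p))| * 1 := by
        rw [det_spanMap, mul_one]; rfl
    _ ≤ ENNReal.ofReal |LinearMap.det (spanMap (q - p) (r - p))| * (2 * volume unitTriangle) := by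
        gcongr; exact one_le_two_mul_volume_unitTriangle
    _ = 2 * volume ((fun w => p + spanMap (q - p) (r - p) w) '' unitTriangle) := by
        rw [addHaar_image_const_add_linearMap, mul_left_comm]
    _ ≤ 2 * volume K := by gcongr; exact hK.image_unitTriangle_subset hp hq hr

theorem stmt_4 (K : Set (ℝ × ℝ)) (hK : Convex ℝ K)
    (hvol : MeasureTheory.volume K < 1 / 2) :
    ∃ a b c : ℝ, (a, b) ≠ (0, 0) ∧
      ∀ x ∈ K, (∃ p q : ℤ, x = ((p : ℝ), (q : ℝ))) → a * x.1 + b * x.2 = c := by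
  by_contra! hcon
  obtain ⟨_, hp, ⟨p₁, p₂, rfl⟩, -⟩ := hcon 1 0 0 (by simp)
  obtain ⟨_, hq, ⟨q₁, q₂, rfl⟩, hq₁⟩ := hcon 1 0 p₁ (by simp)
  obtain ⟨_, hr, ⟨r₁, r₂, rfl⟩, hr_off⟩ :=
    hcon (q₂ - p₂) (p₁ - q₁) ((q₂ - p₂) * p₁ + (p₁ - q₁) * p₂)
      fun h => hq₁ (by simpa [sub_eq_zero, eq_comm] using congrArg Prod.snd h)
  have hcross : (q₁ - p₁) * (r₂ - p₂) - (q₂ - p₂) * (r₁ - p₁) ≠ 0 := by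
    intro h
    apply hr_off
    have := congrArg (Int.cast : ℤ → ℝ) h
    push_cast at this
    linarith
  have h2vol : 2 * volume K < 1 := by
    simpa [mul_comm] using ENNReal.mul_lt_of_lt_div hvol
  have h1 : (1 : ℝ) ≤ |((q₁ : ℝ) - p₁) * (r₂ - p₂) - (q₂ - p₂) * (r₁ - p₁)| := by
    exact_mod_cast Int.one_le_abs hcross
  exact ((ENNReal.one_le_ofReal.mpr h1).trans
    (hK.ofReal_abs_cross_le_two_mul_volume hp hq hr)).not_gt h2vol
end

section
/- Let f : ℝ² → ℝ be continuous and twice continuously differentiable on a nonempty open convex set S ⊆ ℝ². If D_f(x) < 0 for all x ∈ S, where D_f denotes the determinant of the bordered Hessian of f, then f is quasiconvex on the closure of S. -/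
/-!
On a segment `t ↦ x + t • v` in `S`, the function `g t = f (x + t • v)` has `g' = ∇f · v` and
`g'' = ∇²f (v, v)`. A nonzero `v` with `∇f · v = 0` is a multiple of `(f₂, -f₁)`, at which the
Hessian form equals `-D_f > 0`. Hence `g'' > 0` at every interior critical point of `g`, so `g`
has no interior maximum and `g ≤ max (g 0) (g 1)`: `f` is quasiconvex on `S`. The inequality
`f (a • x + b • y) ≤ max (f x) (f y)` is a closed condition on `(x, y)`, so it passes to the
closure of `S`.
-/

open Set Filter Topology

theorem IsLocalMax.deriv_deriv_nonpos {g : ℝ → ℝ} {t : ℝ} (hmax : IsLocalMax g t)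
    (hc : ContinuousAt g t) : deriv (deriv g) t ≤ 0 := by
  by_contra! hpos
  have hmin : IsLocalMin g t := isLocalMin_of_deriv_deriv_pos hpos hmax.deriv_eq_zero hc
  have hconst : g =ᶠ[𝓝 t] fun _ => g t :=
    (hmin.and hmax).mono fun _ hs => le_antisymm hs.2 hs.1
  have hderiv : deriv g =ᶠ[𝓝 t] fun _ => 0 :=
    hconst.deriv.trans (.of_forall fun _ => deriv_const _ _)
  exact hpos.ne' (by rw [hderiv.deriv_eq, deriv_const])

theorem le_max_of_deriv_deriv_pos {g : ℝ → ℝ} {a b : ℝ} (hg : ContinuousOn g (Icc a b))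
    (hcrit : ∀ t ∈ Ioo a b, deriv g t = 0 → 0 < deriv (deriv g) t) :
    ∀ t ∈ Icc a b, g t ≤ max (g a) (g b) := by
  intro t ht
  obtain ⟨t₀, ht₀, hmax⟩ := isCompact_Icc.exists_isMaxOn ⟨t, ht⟩ hg
  obtain rfl | ha := ht₀.1.eq_or_lt
  · exact le_max_of_le_left (hmax ht)
  obtain rfl | hb := ht₀.2.eq_or_lt
  · exact le_max_of_le_right (hmax ht)
  have hnhds : Icc a b ∈ 𝓝 t₀ := Icc_mem_nhds ha hb
  have hlocal : IsLocalMax g t₀ := hmax.isLocalMax hnhds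
  have hc : ContinuousAt g t₀ := hg.continuousAt hnhds
  exact absurd (hlocal.deriv_deriv_nonpos hc) (hcrit t₀ ⟨ha, hb⟩ hlocal.deriv_eq_zero).not_ge

section LineMap

variable {E : Type*} [NormedAddCommGroup E] [NormedSpace ℝ E] {f : E → ℝ}

open AffineMap

theorem deriv_comp_lineMap {x y : E} {t : ℝ} (hf : DifferentiableAt ℝ f (lineMap x y t)) :
    deriv (f ∘ lineMap x y) t = fderiv ℝ f (lineMap x y t) (y - x) :=
  (hf.hasFDerivAt.comp_hasDerivAt t hasDerivAt_lineMap).deriv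

theorem deriv_deriv_comp_lineMap {x y : E} {t : ℝ} (hf : ContDiffAt ℝ 2 f (lineMap x y t)) :
    deriv (deriv (f ∘ lineMap x y)) t = fderiv ℝ (fderiv ℝ f) (lineMap x y t) (y - x) (y - x) := by
  have hnear : ∀ᶠ s in 𝓝 t, ContDiffAt ℝ 2 f (lineMap x y s) :=
    lineMap_continuous.continuousAt.eventually (hf.eventually (by simp))
  have hderiv : deriv (f ∘ lineMap x y) =ᶠ[𝓝 t] fun s => fderiv ℝ f (lineMap x y s) (y - x) :=
    hnear.mono fun s hs => deriv_comp_lineMap (hs.differentiableAt two_ne_zero)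
  have hf' : DifferentiableAt ℝ (fderiv ℝ f) (lineMap x y t) :=
    (hf.fderiv_right (m := 1) (by norm_num)).differentiableAt one_ne_zero
  rw [hderiv.deriv_eq]
  exact ((ContinuousLinearMap.apply ℝ ℝ (y - x)).hasFDerivAt.comp_hasDerivAt t
    (hf'.hasFDerivAt.comp_hasDerivAt t hasDerivAt_lineMap)).deriv

theorem quasiconvexOn_of_fderiv_fderiv_pos {S : Set E} (hSopen : IsOpen S) (hSconv : Convex ℝ S)
    (hf : ContDiffOn ℝ 2 f S)
    (hpos : ∀ x ∈ S, ∀ v ≠ 0, fderiv ℝ f x v = 0 → 0 < fderiv ℝ (fderiv ℝ f) x v v) :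
    QuasiconvexOn ℝ S f := by
  refine quasiconvexOn_iff_le_max.2 ⟨hSconv, fun x hx y hy a b ha hb hab => ?_⟩
  obtain rfl | hxy := eq_or_ne x y
  · rw [Convex.combo_self hab]
    exact le_max_left _ _
  have hline : ∀ t ∈ Icc (0 : ℝ) 1, lineMap x y t ∈ S := fun t ht => hSconv.lineMap_mem hx hy ht
  have hC2 : ∀ t ∈ Icc (0 : ℝ) 1, ContDiffAt ℝ 2 f (lineMap x y t) := fun t ht =>
    hf.contDiffAt (hSopen.mem_nhds (hline t ht))
  have hcont : ContinuousOn (f ∘ lineMap x y) (Icc (0 : ℝ) 1) := fun t ht =>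
    ((hC2 t ht).continuousAt.comp lineMap_continuous.continuousAt).continuousWithinAt
  have hcrit : ∀ t ∈ Ioo (0 : ℝ) 1,
      deriv (f ∘ lineMap x y) t = 0 → 0 < deriv (deriv (f ∘ lineMap x y)) t := by
    intro t ht hcrit
    have ht := Ioo_subset_Icc_self ht
    rw [deriv_comp_lineMap ((hC2 t ht).differentiableAt two_ne_zero)] at hcrit
    rw [deriv_deriv_comp_lineMap (hC2 t ht)]
    exact hpos _ (hline t ht) _ (sub_ne_zero.2 hxy.symm) hcrit
  have hb' : lineMap x y b = a • x + b • y := by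
    rw [lineMap_apply_module, ← eq_sub_of_add_eq hab]
  simpa only [Function.comp_apply, hb', lineMap_apply_zero, lineMap_apply_one] using
    le_max_of_deriv_deriv_pos hcont hcrit b ⟨hb, by linarith⟩

end LineMap

theorem QuasiconvexOn.closure {E β : Type*} [TopologicalSpace E] [AddCommGroup E] [Module ℝ E]
    [IsTopologicalAddGroup E] [ContinuousSMul ℝ E] [LinearOrder β] [TopologicalSpace β]
    [OrderClosedTopology β] {s : Set E} {f : E → β} (hs : QuasiconvexOn ℝ s f)
    (hf : Continuous f) : QuasiconvexOn ℝ (closure s) f := by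
  obtain ⟨hconv, hle⟩ := quasiconvexOn_iff_le_max.1 hs
  refine quasiconvexOn_iff_le_max.2 ⟨hconv.closure, fun x hx y hy a b ha hb hab => ?_⟩
  have hclosed : IsClosed {p : E × E | f (a • p.1 + b • p.2) ≤ max (f p.1) (f p.2)} :=
    isClosed_le (by fun_prop) (by fun_prop)
  have hsub : _root_.closure (s ×ˢ s) ⊆
      {p : E × E | f (a • p.1 + b • p.2) ≤ max (f p.1) (f p.2)} :=
    hclosed.closure_subset_iff.2 fun p hp => hle hp.1 hp.2 ha hb hab
  exact hsub (closure_prod_eq (s := s) (t := s) ▸ mk_mem_prod hx hy :)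

theorem fderiv_fderiv_apply_const {E F : Type*} [NormedAddCommGroup E] [NormedSpace ℝ E]
    [NormedAddCommGroup F] [NormedSpace ℝ F] {f : E → F} {x : E}
    (hf : DifferentiableAt ℝ (fderiv ℝ f) x) (v w : E) :
    fderiv ℝ (fun y => fderiv ℝ f y w) x v = fderiv ℝ (fderiv ℝ f) x v w := by
  simp [fderiv_clm_apply hf (differentiableAt_const w)]

theorem quadratic_pos_of_bordered_det_neg {A C p q r v₁ v₂ : ℝ}
    (hD : 2 * A * C * q - A ^ 2 * r - C ^ 2 * p < 0) (hv : v₁ ≠ 0 ∨ v₂ ≠ 0)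
    (hL : A * v₁ + C * v₂ = 0) : 0 < p * v₁ ^ 2 + 2 * q * v₁ * v₂ + r * v₂ ^ 2 := by
  have hAC : 0 < A ^ 2 + C ^ 2 := by
    by_contra! h
    obtain ⟨rfl, rfl⟩ : A = 0 ∧ C = 0 := ⟨by nlinarith, by nlinarith⟩
    simp at hD
  have hv' : 0 < v₁ ^ 2 + v₂ ^ 2 := by
    rcases hv with h | h <;> positivity
  -- `v` is a multiple of `(C, -A)`, where the quadratic form takes the value `-D`.
  have key : (A ^ 2 + C ^ 2) * (p * v₁ ^ 2 + 2 * q * v₁ * v₂ + r * v₂ ^ 2) =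
      (v₁ ^ 2 + v₂ ^ 2) * -(2 * A * C * q - A ^ 2 * r - C ^ 2 * p) := by
    linear_combination (p * (A * v₁ - C * v₂) + r * (C * v₂ - A * v₁) +
      2 * q * (A * v₂ + C * v₁)) * hL
  exact pos_of_mul_pos_right (key ▸ mul_pos hv' (neg_pos.2 hD)) hAC.le

noncomputable def borderedHessianDet (f : ℝ × ℝ → ℝ) (x : ℝ × ℝ) : ℝ :=
  2 * fderiv ℝ f x ((1 : ℝ), (0 : ℝ)) * fderiv ℝ f x ((0 : ℝ), (1 : ℝ)) *
        fderiv ℝ (fun y => fderiv ℝ f y ((1 : ℝ), (0 : ℝ))) x ((0 : ℝ), (1 : ℝ)) -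
      (fderiv ℝ f x ((1 : ℝ), (0 : ℝ))) ^ 2 *
        fderiv ℝ (fun y => fderiv ℝ f y ((0 : ℝ), (1 : ℝ))) x ((0 : ℝ), (1 : ℝ)) -
      (fderiv ℝ f x ((0 : ℝ), (1 : ℝ))) ^ 2 *
        fderiv ℝ (fun y => fderiv ℝ f y ((1 : ℝ), (0 : ℝ))) x ((1 : ℝ), (0 : ℝ))

theorem fderiv_fderiv_pos_of_borderedHessianDet_neg {f : ℝ × ℝ → ℝ} {x : ℝ × ℝ}
    (hf : ContDiffAt ℝ 2 f x) (hD : borderedHessianDet f x < 0) {v : ℝ × ℝ} (hv : v ≠ 0)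
    (hcrit : fderiv ℝ f x v = 0) : 0 < fderiv ℝ (fderiv ℝ f) x v v := by
  have hf' : DifferentiableAt ℝ (fderiv ℝ f) x :=
    (hf.fderiv_right (m := 1) le_rfl).differentiableAt one_ne_zero
  have hsymm : IsSymmSndFDerivAt ℝ f x := hf.isSymmSndFDerivAt (by simp)
  simp only [borderedHessianDet, fderiv_fderiv_apply_const hf'] at hD
  have hcoord : v.1 ≠ 0 ∨ v.2 ≠ 0 := by
    contrapose! hv
    exact Prod.ext hv.1 hv.2
  have hbasis : v = v.1 • ((1 : ℝ), (0 : ℝ)) + v.2 • ((0 : ℝ), (1 : ℝ)) := by ext <;> simp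
  rw [hbasis] at hcrit ⊢
  simp only [map_add, map_smul, add_apply, smul_apply, smul_eq_mul] at hcrit ⊢
  have := quadratic_pos_of_bordered_det_neg hD hcoord (by linarith)
  rw [hsymm ((1 : ℝ), (0 : ℝ)) ((0 : ℝ), (1 : ℝ))]
  linarith

theorem stmt_5_general (f : ℝ × ℝ → ℝ) (hf : Continuous f) (S : Set (ℝ × ℝ))
    (hSopen : IsOpen S) (hSconv : Convex ℝ S)
    (hC2 : ContDiffOn ℝ 2 f S)
    (hD : ∀ x ∈ S,
      2 * fderiv ℝ f x ((1 : ℝ), (0 : ℝ)) * fderiv ℝ f x ((0 : ℝ), (1 : ℝ)) *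
            fderiv ℝ (fun y => fderiv ℝ f y ((1 : ℝ), (0 : ℝ))) x ((0 : ℝ), (1 : ℝ)) -
          (fderiv ℝ f x ((1 : ℝ), (0 : ℝ))) ^ 2 *
            fderiv ℝ (fun y => fderiv ℝ f y ((0 : ℝ), (1 : ℝ))) x ((0 : ℝ), (1 : ℝ)) -
          (fderiv ℝ f x ((0 : ℝ), (1 : ℝ))) ^ 2 *
            fderiv ℝ (fun y => fderiv ℝ f y ((1 : ℝ), (0 : ℝ))) x ((1 : ℝ), (0 : ℝ)) < 0) :
    QuasiconvexOn ℝ (closure S) f := by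
  refine QuasiconvexOn.closure (quasiconvexOn_of_fderiv_fderiv_pos hSopen hSconv hC2
    fun x hx v hv hcrit => ?_) hf
  exact fderiv_fderiv_pos_of_borderedHessianDet_neg (hC2.contDiffAt (hSopen.mem_nhds hx))
    (hD x hx) hv hcrit

theorem stmt_5 (f : ℝ × ℝ → ℝ) (hf : Continuous f) (S : Set (ℝ × ℝ))
    (hSopen : IsOpen S) (hSconv : Convex ℝ S) (hSne : S.Nonempty)
    (hC2 : ContDiffOn ℝ 2 f S)
    (hD : ∀ x ∈ S,
      2 * fderiv ℝ f x ((1 : ℝ), (0 : ℝ)) * fderiv ℝ f x ((0 : ℝ), (1 : ℝ)) *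
            fderiv ℝ (fun y => fderiv ℝ f y ((1 : ℝ), (0 : ℝ))) x ((0 : ℝ), (1 : ℝ)) -
          (fderiv ℝ f x ((1 : ℝ), (0 : ℝ))) ^ 2 *
            fderiv ℝ (fun y => fderiv ℝ f y ((0 : ℝ), (1 : ℝ))) x ((0 : ℝ), (1 : ℝ)) -
          (fderiv ℝ f x ((0 : ℝ), (1 : ℝ))) ^ 2 *
            fderiv ℝ (fun y => fderiv ℝ f y ((1 : ℝ), (0 : ℝ))) x ((1 : ℝ), (0 : ℝ)) < 0) :
    QuasiconvexOn ℝ (closure S) f :=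
  stmt_5_general f hf S hSopen hSconv hC2 hD
end

section
/- Let f : ℝ² → ℝ be continuous and twice continuously differentiable on a nonempty open convex set S ⊆ ℝ². If D_f(x) > 0 for all x ∈ S, where D_f denotes the determinant of the bordered Hessian of f, then f is quasiconcave on the closure of S. -/
/-!
Along a segment `t ↦ x + t • v` in `S`, a critical point of `t ↦ f (x + t • v)` has
`f' v = 0`, and the positive bordered determinant makes the Hessian negative definite on the
line orthogonal to the gradient, so the second derivative there is negative. Hence the restriction
has no local minimum in the open segment, and its minimum on the closed segment is attained at an
endpoint: this is `min (f x) (f y) ≤ f (a • x + b • y)`. Quasiconcavity passes to `closure S` by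
continuity.
-/

open Filter Set Topology

theorem IsLocalMin.nonneg_of_hasDerivAt_of_hasDerivAt {g g' : ℝ → ℝ} {t₀ g'' : ℝ}
    (hmin : IsLocalMin g t₀) (hg : ∀ᶠ t in 𝓝 t₀, HasDerivAt g (g' t) t)
    (hg' : HasDerivAt g' g'' t₀) : 0 ≤ g'' := by
  by_contra! hneg
  have hderiv : deriv g =ᶠ[𝓝 t₀] g' := hg.mono fun t ht => ht.deriv
  have hd : deriv g t₀ = 0 := hderiv.self_of_nhds.trans (hmin.hasDerivAt_eq_zero hg.self_of_nhds)
  have hdd : deriv (deriv g) t₀ < 0 := by rwa [hderiv.deriv_eq, hg'.deriv]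
  have hmax := isLocalMax_of_deriv_deriv_neg hdd hd hg.self_of_nhds.continuousAt
  have hconst : deriv g =ᶠ[𝓝 t₀] fun _ => 0 := by
    have : g =ᶠ[𝓝 t₀] fun _ => g t₀ := (hmin.and hmax).mono fun t ht => le_antisymm ht.2 ht.1
    exact this.eventuallyEq_nhds.mono fun t ht => by rw [ht.deriv_eq, deriv_const]
  rw [hconst.deriv_eq, deriv_const] at hdd
  exact lt_irrefl _ hdd

theorem min_le_of_forall_not_isLocalMin {β : Type*} [LinearOrder β] [TopologicalSpace β]
    [ClosedIicTopology β] {g : ℝ → β} {a b t : ℝ} (hg : ContinuousOn g (Icc a b))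
    (hmin : ∀ s ∈ Ioo a b, ¬IsLocalMin g s) (ht : t ∈ Icc a b) : min (g a) (g b) ≤ g t := by
  obtain ⟨s, hs, hsmin⟩ := isCompact_Icc.exists_isMinOn ⟨t, ht⟩ hg
  rcases eq_endpoints_or_mem_Ioo_of_mem_Icc hs with rfl | rfl | hs'
  · exact (min_le_left _ _).trans (hsmin ht)
  · exact (min_le_right _ _).trans (hsmin ht)
  · exact absurd (hsmin.isLocalMin (Icc_mem_nhds hs'.1 hs'.2)) (hmin s hs')

theorem QuasiconcaveOn.closure_of_continuousOn {E β : Type*} [AddCommGroup E] [Module ℝ E]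
    [TopologicalSpace E] [IsTopologicalAddGroup E] [ContinuousSMul ℝ E] [LinearOrder β]
    [TopologicalSpace β] [OrderClosedTopology β] {f : E → β} {S : Set E} (hf : QuasiconcaveOn ℝ S f)
    (hc : ContinuousOn f (closure S)) : QuasiconcaveOn ℝ (closure S) f := by
  refine quasiconcaveOn_iff_min_le.2 ⟨hf.convex.closure, fun x hx y hy a b ha hb hab => ?_⟩
  have : (𝓝[S ×ˢ S] (x, y)).NeBot :=
    mem_closure_iff_nhdsWithin_neBot.1 (by rw [closure_prod_eq]; exact ⟨hx, hy⟩)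
  have hfst : Tendsto Prod.fst (𝓝[S ×ˢ S] (x, y)) (𝓝[closure S] x) :=
    continuous_fst.continuousWithinAt.tendsto_nhdsWithin fun p hp => subset_closure hp.1
  have hsnd : Tendsto Prod.snd (𝓝[S ×ˢ S] (x, y)) (𝓝[closure S] y) :=
    continuous_snd.continuousWithinAt.tendsto_nhdsWithin fun p hp => subset_closure hp.2
  have hcombo : Tendsto (fun p : E × E => a • p.1 + b • p.2) (𝓝[S ×ˢ S] (x, y))
      (𝓝[closure S] (a • x + b • y)) :=
    (by fun_prop : Continuous fun p : E × E => a • p.1 + b • p.2).continuousWithinAt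
      |>.tendsto_nhdsWithin fun p hp => subset_closure (hf.convex hp.1 hp.2 ha hb hab)
  refine le_of_tendsto_of_tendsto
    (((hc x hx).tendsto.comp hfst).min ((hc y hy).tendsto.comp hsnd))
    ((hc _ (hf.convex.closure hx hy ha hb hab)).tendsto.comp hcombo) ?_
  filter_upwards [self_mem_nhdsWithin] with p hp
  exact (quasiconcaveOn_iff_min_le.1 hf).2 hp.1 hp.2 ha hb hab

theorem quasiconcaveOn_of_hasFDerivAt_of_apply_apply_neg {E : Type*} [NormedAddCommGroup E]
    [NormedSpace ℝ E] {f : E → ℝ} {f' : E → E →L[ℝ] ℝ} {f'' : E → E →L[ℝ] E →L[ℝ] ℝ}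
    {S : Set E} (hS : IsOpen S) (hconv : Convex ℝ S)
    (hf : ∀ x ∈ S, HasFDerivAt f (f' x) x) (hf' : ∀ x ∈ S, HasFDerivAt f' (f'' x) x)
    (hneg : ∀ x ∈ S, ∀ v ≠ 0, f' x v = 0 → f'' x v v < 0) : QuasiconcaveOn ℝ S f := by
  refine quasiconcaveOn_iff_min_le.2 ⟨hconv, fun x hx y hy a b ha hb hab => ?_⟩
  obtain rfl | hxy := eq_or_ne x y
  · rw [← add_smul, hab, one_smul, min_self]
  set v := y - x
  set γ : ℝ → E := fun t => x + t • v
  have hγ (t : ℝ) : HasDerivAt γ v t :=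
    (((hasDerivAt_id t).smul_const v).const_add x).congr_deriv (one_smul ℝ v)
  have hU : IsOpen (γ ⁻¹' S) :=
    hS.preimage (continuous_const.add (continuous_id.smul continuous_const))
  have hg (t : ℝ) (ht : t ∈ γ ⁻¹' S) : HasDerivAt (f ∘ γ) (f' (γ t) v) t :=
    (hf _ ht).comp_hasDerivAt t (hγ t)
  have hg' (t : ℝ) (ht : t ∈ γ ⁻¹' S) :
      HasDerivAt (fun s => f' (γ s) v) (f'' (γ t) v v) t := by
    simpa using ((hf' _ ht).comp_hasDerivAt t (hγ t)).clm_apply (hasDerivAt_const t v)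
  have hseg : Icc 0 1 ⊆ γ ⁻¹' S := fun t ht => hconv.add_smul_sub_mem hx hy ht
  have hcombo : a • x + b • y = γ b := by
    rw [eq_sub_of_add_eq hab]
    simp only [γ, v]
    module
  have hends : min (f x) (f y) = min ((f ∘ γ) 0) ((f ∘ γ) 1) := by simp [γ, v]
  rw [hcombo, hends]
  refine min_le_of_forall_not_isLocalMin (g := f ∘ γ)
    (fun t ht => (hg t (hseg ht)).continuousAt.continuousWithinAt)
    (fun t ht hmin => ?_) ⟨hb, by linarith⟩
  have htS := hseg (Ioo_subset_Icc_self ht)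
  have hcrit : f' (γ t) v = 0 := hmin.hasDerivAt_eq_zero (hg t htS)
  exact (hneg _ htS v (sub_ne_zero.2 hxy.symm) hcrit).not_ge <|
    hmin.nonneg_of_hasDerivAt_of_hasDerivAt
      (eventually_of_mem (hU.mem_nhds htS) hg) (hg' t htS)

theorem quadratic_neg_of_borderedDet_pos {f₁ f₂ a b c v₁ v₂ : ℝ}
    (hD : 0 < 2 * f₁ * f₂ * b - f₁ ^ 2 * c - f₂ ^ 2 * a) (hperp : f₁ * v₁ + f₂ * v₂ = 0)
    (hv : v₁ ≠ 0 ∨ v₂ ≠ 0) : a * v₁ ^ 2 + 2 * b * v₁ * v₂ + c * v₂ ^ 2 < 0 := by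
  have hgrad : 0 < f₁ ^ 2 + f₂ ^ 2 := by
    by_contra! h
    have h₁ : f₁ = 0 := by nlinarith [sq_nonneg f₁, sq_nonneg f₂]
    have h₂ : f₂ = 0 := by nlinarith [sq_nonneg f₁, sq_nonneg f₂]
    simp [h₁, h₂] at hD
  have hvpos : 0 < v₁ ^ 2 + v₂ ^ 2 := by
    rcases hv with h | h <;> positivity
  -- `v` is a multiple of `(-f₂, f₁)`, on which the quadratic form equals `-D`
  have hid : (f₁ ^ 2 + f₂ ^ 2) * (a * v₁ ^ 2 + 2 * b * v₁ * v₂ + c * v₂ ^ 2)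
      = -((v₁ ^ 2 + v₂ ^ 2) * (2 * f₁ * f₂ * b - f₁ ^ 2 * c - f₂ ^ 2 * a)) := by
    linear_combination
      ((v₁ * f₁ - v₂ * f₂) * a + (v₂ * f₂ - v₁ * f₁) * c + 2 * (f₁ * v₂ + f₂ * v₁) * b) * hperp
  have hprod : (f₁ ^ 2 + f₂ ^ 2) * (a * v₁ ^ 2 + 2 * b * v₁ * v₂ + c * v₂ ^ 2) < 0 := by
    rw [hid]
    exact neg_neg_of_pos (mul_pos hvpos hD)
  exact neg_of_mul_neg_right hprod hgrad.le

theorem apply_apply_self_neg_of_borderedDet_pos (L : ℝ × ℝ →L[ℝ] ℝ)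
    (Q : ℝ × ℝ →L[ℝ] ℝ × ℝ →L[ℝ] ℝ) (hQ : Q (1, 0) (0, 1) = Q (0, 1) (1, 0))
    (hD : 0 < 2 * L (1, 0) * L (0, 1) * Q (0, 1) (1, 0) - L (1, 0) ^ 2 * Q (0, 1) (0, 1)
      - L (0, 1) ^ 2 * Q (1, 0) (1, 0))
    {v : ℝ × ℝ} (hv : v ≠ 0) (hLv : L v = 0) : Q v v < 0 := by
  have hbasis : v = v.1 • ((1, 0) : ℝ × ℝ) + v.2 • ((0, 1) : ℝ × ℝ) := by
    ext <;> simp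
  rw [hbasis] at hLv ⊢
  simp only [map_add, map_smul, add_apply, smul_apply, smul_eq_mul] at hLv ⊢
  have hv' : v.1 ≠ 0 ∨ v.2 ≠ 0 := by
    by_contra! h
    exact hv (Prod.ext h.1 h.2)
  have := quadratic_neg_of_borderedDet_pos hD (by linarith) hv'
  rw [hQ]
  linarith

theorem stmt_6_general (f : ℝ × ℝ → ℝ) (hf : Continuous f) (S : Set (ℝ × ℝ))
    (hSopen : IsOpen S) (hSconv : Convex ℝ S)
    (hC2 : ContDiffOn ℝ 2 f S)
    (hD : ∀ x ∈ S,
      2 * fderiv ℝ f x ((1 : ℝ), (0 : ℝ)) * fderiv ℝ f x ((0 : ℝ), (1 : ℝ)) *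
            fderiv ℝ (fun y => fderiv ℝ f y ((1 : ℝ), (0 : ℝ))) x ((0 : ℝ), (1 : ℝ)) -
          (fderiv ℝ f x ((1 : ℝ), (0 : ℝ))) ^ 2 *
            fderiv ℝ (fun y => fderiv ℝ f y ((0 : ℝ), (1 : ℝ))) x ((0 : ℝ), (1 : ℝ)) -
          (fderiv ℝ f x ((0 : ℝ), (1 : ℝ))) ^ 2 *
            fderiv ℝ (fun y => fderiv ℝ f y ((1 : ℝ), (0 : ℝ))) x ((1 : ℝ), (0 : ℝ)) > 0) :
    QuasiconcaveOn ℝ (closure S) f := by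
  have hC2at {x} (hx : x ∈ S) : ContDiffAt ℝ 2 f x := hC2.contDiffAt (hSopen.mem_nhds hx)
  have hf' : ∀ x ∈ S, HasFDerivAt f (fderiv ℝ f x) x := fun x hx =>
    ((hC2at hx).differentiableAt two_ne_zero).hasFDerivAt
  have hf'' : ∀ x ∈ S, HasFDerivAt (fderiv ℝ f) (fderiv ℝ (fderiv ℝ f) x) x := fun x hx =>
    (((hC2at hx).fderiv_right (m := 1) le_rfl).differentiableAt one_ne_zero).hasFDerivAt
  have hpartial : ∀ x ∈ S, ∀ u w : ℝ × ℝ,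
      fderiv ℝ (fun y => fderiv ℝ f y u) x w = fderiv ℝ (fderiv ℝ f) x w u := by
    intro x hx u w
    rw [fderiv_clm_apply (hf'' x hx).differentiableAt (differentiableAt_const u)]
    simp
  refine (quasiconcaveOn_of_hasFDerivAt_of_apply_apply_neg hSopen hSconv hf' hf''
    fun x hx v hv hLv => ?_).closure_of_continuousOn hf.continuousOn
  refine apply_apply_self_neg_of_borderedDet_pos _ _
    ((hC2at hx).isSymmSndFDerivAt (by simp) _ _) ?_ hv hLv
  simpa only [hpartial x hx] using hD x hx

theorem stmt_6 (f : ℝ × ℝ → ℝ) (hf : Continuous f) (S : Set (ℝ × ℝ))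
    (hSopen : IsOpen S) (hSconv : Convex ℝ S) (hSne : S.Nonempty)
    (hC2 : ContDiffOn ℝ 2 f S)
    (hD : ∀ x ∈ S,
      2 * fderiv ℝ f x ((1 : ℝ), (0 : ℝ)) * fderiv ℝ f x ((0 : ℝ), (1 : ℝ)) *
            fderiv ℝ (fun y => fderiv ℝ f y ((1 : ℝ), (0 : ℝ))) x ((0 : ℝ), (1 : ℝ)) -
          (fderiv ℝ f x ((1 : ℝ), (0 : ℝ))) ^ 2 *
            fderiv ℝ (fun y => fderiv ℝ f y ((0 : ℝ), (1 : ℝ))) x ((0 : ℝ), (1 : ℝ)) -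
          (fderiv ℝ f x ((0 : ℝ), (1 : ℝ))) ^ 2 *
            fderiv ℝ (fun y => fderiv ℝ f y ((1 : ℝ), (0 : ℝ))) x ((1 : ℝ), (0 : ℝ)) > 0) :
    QuasiconcaveOn ℝ (closure S) f :=
  stmt_6_general f hf S hSopen hSconv hC2 hD
end

section
/- Let h : ℝⁿ → ℝ be a twice continuously differentiable function that is homogeneous of degree d for an integer d ≥ 2. Then the determinant of the bordered Hessian of h satisfies D_h(x) = (−d/(d−1)) · h(x) · det(∇²h(x)) for all x ∈ ℝⁿ. -/
/-!
Euler's identity `∇h(x) · x = d h(x)`, applied also to the gradient, which is homogeneous of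
degree `d - 1`, gives `∇²h(x) x = (d - 1) ∇h(x)`. Hence the combination of the rows of the
bordered Hessian with coefficients `(-(d - 1), x₁, …, xₙ)` is `(d h(x), 0, …, 0)`; replacing the
first row by it multiplies the determinant by `-(d - 1)`, and expanding along that row gives
`-(d - 1) D_h(x) = d h(x) det ∇²h(x)`.
-/

open Filter Topology Matrix

section Bordered

variable {R : Type*} [CommRing R] {n : ℕ}

def borderedMatrix (g : Fin n → R) (H : Matrix (Fin n) (Fin n) R) :
    Matrix (Fin (n + 1)) (Fin (n + 1)) R :=
  Matrix.of (Fin.cons (Fin.cons 0 g) fun i => Fin.cons (g i) (H i))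

theorem det_updateRow_zero_cons_zero (A : Matrix (Fin (n + 1)) (Fin (n + 1)) R) (s : R) :
    (A.updateRow 0 (Fin.cons s 0)).det = s * (A.submatrix Fin.succ Fin.succ).det := by
  simp only [det_succ_row_zero, Fin.sum_univ_succ, updateRow_self, Fin.cons_zero, Fin.cons_succ,
    Pi.zero_apply, mul_zero, zero_mul, Finset.sum_const_zero, add_zero, Fin.val_zero, pow_zero,
    one_mul, Fin.succAbove_zero]
  -- `updateRow` at `0` leaves the rows `i.succ` unchanged definitionally
  rfl

-- The row combination with coefficients `(-a, v)` is `(s, 0, …, 0)`.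
theorem neg_mul_det_borderedMatrix {g v : Fin n → R} {H : Matrix (Fin n) (Fin n) R} {a s : R}
    (hg : v ⬝ᵥ g = s) (hH : v ᵥ* H = a • g) :
    -a * (borderedMatrix g H).det = s * H.det := by
  set M := borderedMatrix g H
  have hrow : ∑ k, (Fin.cons (-a) v : Fin (n + 1) → R) k • M k = Fin.cons s 0 := by
    rw [Fin.sum_univ_succ]
    ext j
    refine Fin.cases ?_ (fun j => ?_) j
    · simpa [M, borderedMatrix, dotProduct] using hg
    · simpa [M, borderedMatrix, vecMul, dotProduct, neg_add_eq_zero] using (congrFun hH j).symm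
  calc -a * M.det = (M.updateRow 0 (Fin.cons s 0)).det := by
        rw [← hrow, det_updateRow_sum, Fin.cons_zero, smul_eq_mul]
    _ = s * H.det := det_updateRow_zero_cons_zero M s

end Bordered

section Homogeneous

variable {𝕜 E F : Type*} [NontriviallyNormedField 𝕜] [NormedAddCommGroup E] [NormedSpace 𝕜 E]
  [NormedAddCommGroup F] [NormedSpace 𝕜 F]

theorem fderiv_apply_self_of_homogeneous {f : E → F} {x : E} {d : ℕ}
    (hf : DifferentiableAt 𝕜 f x) (hhom : ∀ᶠ l in 𝓝 (1 : 𝕜), f (l • x) = l ^ d • f x) :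
    fderiv 𝕜 f x x = (d : 𝕜) • f x := by
  have hray : HasDerivAt (fun l : 𝕜 => f (l • x)) (fderiv 𝕜 f x x) 1 := by
    have hline : HasDerivAt (fun l : 𝕜 => l • x) x 1 := by
      simpa using (hasDerivAt_id (1 : 𝕜)).smul_const x
    exact hf.hasFDerivAt.comp_hasDerivAt_of_eq 1 hline (one_smul 𝕜 x).symm
  have hpow : HasDerivAt (fun l : 𝕜 => l ^ d • f x) ((d : 𝕜) • f x) 1 := by
    simpa using (hasDerivAt_pow d (1 : 𝕜)).smul_const (f x)
  exact (hray.congr_of_eventuallyEq (hhom.mono fun _ => Eq.symm)).unique hpow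

theorem fderiv_smul_of_homogeneous {f : E → F} {d : ℕ} (hd : 1 ≤ d) {l : 𝕜} (hl : l ≠ 0)
    (hhom : ∀ y, f (l • y) = l ^ d • f y) (x : E) (hf : DifferentiableAt 𝕜 f x) :
    fderiv 𝕜 f (l • x) = l ^ (d - 1) • fderiv 𝕜 f x := by
  have h := fderiv_comp_smul (f := f) (x := x) l
  simp only [hhom] at h
  rw [fderiv_fun_const_smul hf, ← Nat.sub_add_cancel hd, pow_succ', mul_smul] at h
  exact (smul_right_injective _ hl h).symm

theorem fderiv_fderiv_apply_self_of_homogeneous {f : E → F} {d : ℕ} (hd : 1 ≤ d)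
    (hf : ContDiff 𝕜 2 f)
    (hhom : ∀ (y : E) (l : 𝕜), f (l • y) = l ^ d • f y) (x : E) :
    fderiv 𝕜 (fderiv 𝕜 f) x x = ((d - 1 : ℕ) : 𝕜) • fderiv 𝕜 f x := by
  have hf' : Differentiable 𝕜 (fderiv 𝕜 f) :=
    (hf.fderiv_right le_rfl).differentiable one_ne_zero
  refine fderiv_apply_self_of_homogeneous (hf' x) ?_
  filter_upwards [eventually_ne_nhds one_ne_zero] with l hl
  exact fderiv_smul_of_homogeneous hd hl (hhom · l) x (hf.differentiable two_ne_zero x)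

end Homogeneous

theorem EuclideanSpace.sum_smul_apply_single {𝕜 ι M F : Type*} [RCLike 𝕜] [Fintype ι]
    [DecidableEq ι] [AddCommMonoid M] [Module 𝕜 M] [FunLike F (EuclideanSpace 𝕜 ι) M]
    [LinearMapClass F 𝕜 (EuclideanSpace 𝕜 ι) M] (L : F) (x : EuclideanSpace 𝕜 ι) :
    ∑ i, x i • L (EuclideanSpace.single i 1) = L x := by
  conv_rhs => rw [← (EuclideanSpace.basisFun ι 𝕜).sum_repr x]
  simp [map_sum, map_smul]

theorem stmt_8 (n : ℕ) (h : EuclideanSpace ℝ (Fin n) → ℝ) (d : ℕ) (hd : 2 ≤ d)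
    (hC2 : ContDiff ℝ 2 h)
    (hhom : ∀ (x : EuclideanSpace ℝ (Fin n)) (l : ℝ), h (l • x) = l ^ d * h x)
    (x : EuclideanSpace ℝ (Fin n)) :
    Matrix.det (Matrix.of (Fin.cons
        (Fin.cons (0 : ℝ) (fun j : Fin n => fderiv ℝ h x (EuclideanSpace.single j 1)))
        (fun i : Fin n => Fin.cons (fderiv ℝ h x (EuclideanSpace.single i 1))
          (fun j : Fin n =>
            fderiv ℝ (fderiv ℝ h) x (EuclideanSpace.single i 1) (EuclideanSpace.single j 1))))) =
      (-(d : ℝ) / ((d : ℝ) - 1)) * h x *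
        Matrix.det (Matrix.of (fun i j : Fin n =>
          fderiv ℝ (fderiv ℝ h) x (EuclideanSpace.single i 1) (EuclideanSpace.single j 1))) := by
  have hgrad : x.ofLp ⬝ᵥ (fun j => fderiv ℝ h x (EuclideanSpace.single j 1)) = d * h x := by
    rw [← smul_eq_mul, ← fderiv_apply_self_of_homogeneous (hC2.differentiable two_ne_zero x)
      (.of_forall (hhom x)), ← EuclideanSpace.sum_smul_apply_single]
    rfl
  have hhess : x.ofLp ᵥ* (Matrix.of fun i j : Fin n =>
        fderiv ℝ (fderiv ℝ h) x (EuclideanSpace.single i 1) (EuclideanSpace.single j 1)) =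
      ((d - 1 : ℕ) : ℝ) • fun j => fderiv ℝ h x (EuclideanSpace.single j 1) := by
    ext j
    rw [Pi.smul_apply, ← _root_.smul_apply,
      ← fderiv_fderiv_apply_self_of_homogeneous (by omega) hC2 hhom x,
      ← EuclideanSpace.sum_smul_apply_single (fderiv ℝ (fderiv ℝ h) x) x]
    simp [vecMul, dotProduct]
  have hd1 : ((d : ℝ) - 1) ≠ 0 := by
    have : (2 : ℝ) ≤ d := by exact_mod_cast hd
    linarith
  have ha : -((d - 1 : ℕ) : ℝ) ≠ 0 := by
    rwa [Nat.cast_sub (by omega), Nat.cast_one, neg_ne_zero]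
  refine mul_left_cancel₀ ha ((neg_mul_det_borderedMatrix hgrad hhess).trans ?_)
  rw [Nat.cast_sub (by omega), Nat.cast_one]
  field_simp
end

section
/- Let h(x,y) = c₀x³ + c₁x²y + c₂xy² + c₃y³ be a homogeneous polynomial of degree 3 with integer coefficients c₀, c₁, c₂, c₃ ∈ ℤ, not identically zero. Suppose there exist real numbers a₁, b₁, a₂, b₂ such that h(x,y) = (a₁x + b₁y)²(a₂x + b₂y) for all (x,y). Then there exist rational numbers a₁', b₁', a₂', b₂' ∈ ℚ and a real number d such that h(x,y) = d · (a₁'x + b₁'y)²(a₂'x + b₂'y) for all (x,y). -/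
/-!
Write the factorisation as `h = L² M`. If `L = b₁ y`, then `h = y² (c₂ x + c₃ y)` already has integer
factors. Otherwise rescale to `L = x + β y`; comparing coefficients forces `M = c₀ x + (c₁ - 2 β c₀) y`,
so everything hinges on `β` being rational. Since `L²` divides `h`, the point `(β, -1)` is a common zero
of the two partial derivatives of `h`, i.e. of two quadratics with rational coefficients. Eliminating
`β²` between them gives `β` by an explicit rational formula, unless the discriminant `c₁² - 3 c₀ c₂`
of the first one vanishes, in which case `β = c₁ / (3 c₀)` is its double root.
-/

section BinaryCubic

variable {K : Type*} [Field K] [CharZero K]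

theorem cubic_eq_sq_mul_iff (c₀ c₁ c₂ c₃ a₁ b₁ a₂ b₂ : K) :
    (∀ x y : K, c₀ * x ^ 3 + c₁ * x ^ 2 * y + c₂ * x * y ^ 2 + c₃ * y ^ 3 =
      (a₁ * x + b₁ * y) ^ 2 * (a₂ * x + b₂ * y)) ↔
    c₀ = a₁ ^ 2 * a₂ ∧ c₁ = a₁ ^ 2 * b₂ + 2 * a₁ * b₁ * a₂ ∧
      c₂ = 2 * a₁ * b₁ * b₂ + b₁ ^ 2 * a₂ ∧ c₃ = b₁ ^ 2 * b₂ := by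
  constructor
  · intro h
    refine ⟨by linear_combination h 1 0, ?_, ?_, by linear_combination h 0 1⟩
    · linear_combination h 1 1 / 2 - h 1 (-1) / 2 - h 0 1
    · linear_combination h 1 1 / 2 + h 1 (-1) / 2 - h 1 0
  · rintro ⟨rfl, rfl, rfl, rfl⟩ x y
    ring

theorem cubic_eq_monic_sq_mul {c₀ c₁ c₂ c₃ a₁ b₁ a₂ b₂ : K} (ha₁ : a₁ ≠ 0)
    (h : ∀ x y : K, c₀ * x ^ 3 + c₁ * x ^ 2 * y + c₂ * x * y ^ 2 + c₃ * y ^ 3 =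
      (a₁ * x + b₁ * y) ^ 2 * (a₂ * x + b₂ * y)) (x y : K) :
    c₀ * x ^ 3 + c₁ * x ^ 2 * y + c₂ * x * y ^ 2 + c₃ * y ^ 3 =
      (x + b₁ / a₁ * y) ^ 2 * (c₀ * x + (c₁ - 2 * (b₁ / a₁) * c₀) * y) := by
  obtain ⟨e₀, e₁, -, -⟩ := (cubic_eq_sq_mul_iff _ _ _ _ _ _ _ _).1 h
  rw [h, e₀, e₁]
  field_simp
  ring

theorem partials_eq_zero_of_cubic_eq_monic_sq_mul {c₀ c₁ c₂ c₃ β : K}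
    (h : ∀ x y : K, c₀ * x ^ 3 + c₁ * x ^ 2 * y + c₂ * x * y ^ 2 + c₃ * y ^ 3 =
      (x + β * y) ^ 2 * (c₀ * x + (c₁ - 2 * β * c₀) * y)) :
    3 * c₀ * β ^ 2 - 2 * c₁ * β + c₂ = 0 ∧ c₁ * β ^ 2 - 2 * c₂ * β + 3 * c₃ = 0 := by
  obtain ⟨-, -, e₂, e₃⟩ := (cubic_eq_sq_mul_iff c₀ c₁ c₂ c₃ 1 β c₀ (c₁ - 2 * β * c₀)).1
    (fun x y => by rw [one_mul]; exact h x y)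
  constructor
  · linear_combination e₂
  · linear_combination -2 * β * e₂ + 3 * e₃

theorem exists_rat_eq_of_partials_eq_zero {c₀ c₁ c₂ c₃ : ℚ}
    (hne : ¬(c₀ = 0 ∧ c₁ = 0 ∧ c₂ = 0 ∧ c₃ = 0)) {β : K}
    (hx : 3 * (c₀ : K) * β ^ 2 - 2 * c₁ * β + c₂ = 0)
    (hy : (c₁ : K) * β ^ 2 - 2 * c₂ * β + 3 * c₃ = 0) :
    ∃ q : ℚ, (q : K) = β := by
  by_cases hΔ : c₁ ^ 2 - 3 * c₀ * c₂ = 0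
  · by_cases hc₀ : c₀ = 0
    · have hc₁ : c₁ = 0 := by simpa [hc₀] using hΔ
      have hc₂ : c₂ = 0 := by exact_mod_cast (by simpa [hc₀, hc₁] using hx : (c₂ : K) = 0)
      have hc₃ : c₃ = 0 := by exact_mod_cast (by simpa [hc₁, hc₂] using hy : (c₃ : K) = 0)
      exact absurd ⟨hc₀, hc₁, hc₂, hc₃⟩ hne
    · refine ⟨c₁ / (3 * c₀), ?_⟩
      have hΔK : (c₁ : K) ^ 2 - 3 * c₀ * c₂ = 0 := by exact_mod_cast hΔ
      have hsq : (3 * (c₀ : K) * β - c₁) ^ 2 = 0 := by linear_combination 3 * (c₀ : K) * hx + hΔK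
      have hc₀K : (c₀ : K) ≠ 0 := by exact_mod_cast hc₀
      push_cast
      rw [div_eq_iff (mul_ne_zero three_ne_zero hc₀K)]
      linear_combination -(pow_eq_zero_iff two_ne_zero).1 hsq
  · refine ⟨(c₁ * c₂ - 9 * c₀ * c₃) / (2 * (c₁ ^ 2 - 3 * c₀ * c₂)), ?_⟩
    have hΔK : (c₁ : K) ^ 2 - 3 * c₀ * c₂ ≠ 0 := by exact_mod_cast hΔ
    push_cast
    rw [div_eq_iff (mul_ne_zero two_ne_zero hΔK)]
    linear_combination (c₁ : K) * hx - 3 * (c₀ : K) * hy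

end BinaryCubic

theorem stmt_13 (c₀ c₁ c₂ c₃ : ℤ) (hne : ¬(c₀ = 0 ∧ c₁ = 0 ∧ c₂ = 0 ∧ c₃ = 0))
    (hfac : ∃ a₁ b₁ a₂ b₂ : ℝ, ∀ x y : ℝ,
      (c₀ : ℝ) * x ^ 3 + (c₁ : ℝ) * x ^ 2 * y + (c₂ : ℝ) * x * y ^ 2 + (c₃ : ℝ) * y ^ 3 =
        (a₁ * x + b₁ * y) ^ 2 * (a₂ * x + b₂ * y)) :
    ∃ (a₁' b₁' a₂' b₂' : ℚ) (d : ℝ), ∀ x y : ℝ,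
      (c₀ : ℝ) * x ^ 3 + (c₁ : ℝ) * x ^ 2 * y + (c₂ : ℝ) * x * y ^ 2 + (c₃ : ℝ) * y ^ 3 =
        d * ((a₁' : ℝ) * x + (b₁' : ℝ) * y) ^ 2 * ((a₂' : ℝ) * x + (b₂' : ℝ) * y) := by
  obtain ⟨a₁, b₁, a₂, b₂, hfac⟩ := hfac
  by_cases ha₁ : a₁ = 0
  · obtain ⟨-, -, e₂, e₃⟩ := (cubic_eq_sq_mul_iff _ _ _ _ _ _ _ _).1 hfac
    refine ⟨0, 1, c₂, c₃, 1, fun x y => ?_⟩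
    push_cast
    rw [hfac, e₂, e₃, ha₁]
    ring
  · have hmonic := cubic_eq_monic_sq_mul ha₁ hfac
    obtain ⟨hx, hy⟩ := partials_eq_zero_of_cubic_eq_monic_sq_mul hmonic
    obtain ⟨q, hq⟩ := exists_rat_eq_of_partials_eq_zero (c₀ := c₀) (c₁ := c₁) (c₂ := c₂) (c₃ := c₃)
      (by exact_mod_cast hne) (by push_cast; exact hx) (by push_cast; exact hy)
    refine ⟨1, q, c₀, c₁ - 2 * q * c₀, 1, fun x y => ?_⟩
    push_cast
    rw [hq, one_mul, one_mul]
    exact hmonic x y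
end

section
/- Let N be a positive integer that is not a perfect square. Then the minimum of (x² − N y²)² over all integers x ≥ 1 and y ≥ 1 equals 1; that is, (x² − N y²)² ≥ 1 for all integers x, y ≥ 1, and there exist integers x ≥ 1, y ≥ 1 with (x² − N y²)² = 1. -/
theorem stmt_16 (N : ℕ) (hN : 0 < N) (hns : ¬∃ m : ℤ, m ^ 2 = (N : ℤ)) :
    (∀ x y : ℤ, 1 ≤ x → 1 ≤ y → 1 ≤ (x ^ 2 - (N : ℤ) * y ^ 2) ^ 2) ∧
      ∃ x y : ℤ, 1 ≤ x ∧ 1 ≤ y ∧ (x ^ 2 - (N : ℤ) * y ^ 2) ^ 2 = 1 := by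
  have hsq : ¬IsSquare ((N : ℤ)) := by
    rintro ⟨r, hr⟩
    exact hns ⟨r, by rw [sq]; exact hr.symm⟩
  constructor
  · intro x y hx hy
    have hne : x ^ 2 - (N : ℤ) * y ^ 2 ≠ 0 := by
      intro h
      have hxy : x ^ 2 = (N : ℤ) * y ^ 2 := by linarith
      have hy0 : y ≠ 0 := by positivity
      have hdvd : y ^ 2 ∣ x ^ 2 := ⟨(N : ℤ), by linarith⟩
      have : y ∣ x := (Int.pow_dvd_pow_iff two_ne_zero).mp hdvd
      obtain ⟨k, hk⟩ := this
      apply hns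
      refine ⟨k, ?_⟩
      have : (y * k) ^ 2 = (N : ℤ) * y ^ 2 := by rw [← hk]; exact hxy
      have h2 : y ^ 2 * k ^ 2 = y ^ 2 * (N : ℤ) := by ring_nf; ring_nf at this; linarith
      have := mul_left_cancel₀ (pow_ne_zero 2 hy0) h2
      linarith
    have : 1 ≤ |x ^ 2 - (N : ℤ) * y ^ 2| := Int.one_le_abs (by simpa using hne)
    calc (1 : ℤ) = 1 ^ 2 := by norm_num
    _ ≤ |x ^ 2 - (N : ℤ) * y ^ 2| ^ 2 := by
        apply pow_le_pow_left₀ (by norm_num) this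
    _ = (x ^ 2 - (N : ℤ) * y ^ 2) ^ 2 := sq_abs _
  · obtain ⟨a, hax, hay⟩ := Pell.Solution₁.exists_pos_of_not_isSquare
      (d := (N : ℤ)) (by exact_mod_cast hN) hsq
    exact ⟨a.x, a.y, by linarith, by linarith, by rw [a.prop]; norm_num⟩
end
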